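/- arXiv:math/0506184 — 6 statements merged into one kernel-verified Lean document; each statement's English description precedes it below -/
import Mathlib

section
/- For two partial isometries u, v in a C*-algebra, u*v = uv* = 0 if and only if u + λv is a partial isometry for every complex scalar λ with |λ| = 1. -/
/-!
For `‖λ‖ = 1` one has `(u + λv)(u + λv)*(u + λv) = u + λv + (λa + λ²b + λ̄c + d)` with
`a = uu*v + vu*u`, `b = vu*v`, `c = uv*u`, `d = uv*v + vv*u`, and orthogonality kills all four
terms. Conversely, if the bracket vanishes on the unit circle, evaluating it at `±1, ±i` gives
`a = d = 0`. Multiplying `a` by `u*` on the right shows that `vu*` anticommutes with the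
idempotent `uu*`, hence `vu* = vu*·uu* = 0`; symmetrically `d = 0` forces `v*u = 0`.
-/

def IsPartialIsometry {A : Type*} [Mul A] [Star A] (u : A) : Prop := u * star u * u = u

section

variable {A : Type*}

@[simp]
lemma isPartialIsometry_star [Semigroup A] [StarMul A] {u : A} :
    IsPartialIsometry (star u) ↔ IsPartialIsometry u := by
  rw [IsPartialIsometry, IsPartialIsometry, ← star_inj]
  simp [mul_assoc]

lemma IsPartialIsometry.isIdempotentElem_mul_star_self [Semigroup A] [Star A] {u : A}
    (hu : IsPartialIsometry u) : IsIdempotentElem (u * star u) := by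
  rw [IsIdempotentElem, ← mul_assoc, hu]

variable [NonUnitalRing A] [StarRing A] [IsAddTorsionFree A] {u x : A}

lemma IsPartialIsometry.mul_star_eq_zero_of_add_eq_zero
    (hu : IsPartialIsometry u) (h : u * star u * x + x * star u * u = 0) : x * star u = 0 := by
  have hanti : u * star u * (x * star u) + x * star u * (u * star u) = 0 := by
    calc _ = (u * star u * x + x * star u * u) * star u := by simp only [add_mul, mul_assoc]
      _ = 0 := by rw [h, zero_mul]
  have hp := hu.isIdempotentElem_mul_star_self
  calc x * star u = x * star u * (u * star u) := by
        conv_lhs => rw [← isPartialIsometry_star.mpr hu, star_star]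
        simp only [mul_assoc]
    _ = u * star u * (x * star u) := (hp.commute_of_anticommute hanti).eq.symm
    _ = 0 := hp.mul_eq_zero_of_anticommute hanti

lemma IsPartialIsometry.star_mul_eq_zero_of_add_eq_zero
    (hu : IsPartialIsometry u) (h : x * star u * u + u * star u * x = 0) : star u * x = 0 := by
  have h' : star u * star (star u) * star x + star x * star (star u) * star u = 0 := by
    simpa [mul_assoc] using congrArg star h
  have hx := (isPartialIsometry_star.mpr hu).mul_star_eq_zero_of_add_eq_zero h'
  simpa using congrArg star hx

end

lemma Complex.eq_zero_and_eq_zero_of_forall_norm_eq_one {M : Type*} [AddCommGroup M]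
    [Module ℂ M] {a b c d : M}
    (h : ∀ lam : ℂ, ‖lam‖ = 1 → lam • a + (lam * lam) • b + star lam • c + d = 0) :
    a = 0 ∧ d = 0 := by
  have h1 := h 1 (by simp)
  have h2 := h (-1) (by simp)
  have h3 := h I (by simp)
  have h4 := h (-I) (by simp)
  simp only [Complex.star_def, map_one, map_neg, Complex.conj_I, neg_mul_neg, Complex.I_mul_I,
    one_mul] at h1 h2 h3 h4
  have ha : (4 : ℂ) • a = 0 := by
    linear_combination (norm := match_scalars <;> norm_num) h1 - h2 - I • h3 + I • h4
  have hd : (4 : ℂ) • d = 0 := by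
    linear_combination (norm := match_scalars <;> norm_num) h1 + h2 + h3 + h4
  exact ⟨(smul_eq_zero.mp ha).resolve_left (by norm_num),
    (smul_eq_zero.mp hd).resolve_left (by norm_num)⟩

lemma add_smul_mul_star_mul_add_smul {R A : Type*} [CommSemiring R] [Star R]
    [NonUnitalRing A] [StarRing A] [Module R A] [IsScalarTower R A A] [SMulCommClass R A A]
    [StarModule R A] (u v : A) {lam : R} (hlam : star lam * lam = 1) :
    (u + lam • v) * star (u + lam • v) * (u + lam • v) =
      u * star u * u + lam • (v * star v * v) +
        (lam • (u * star u * v + v * star u * u) + (lam * lam) • (v * star u * v) +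
          star lam • (u * star v * u) + (u * star v * v + v * star v * u)) := by
  have hlam' : lam * star lam = 1 := by rw [mul_comm, hlam]
  simp only [star_add, star_smul, mul_add, add_mul, smul_add, smul_mul_assoc, mul_smul_comm,
    smul_smul, hlam, hlam', one_smul]
  abel

theorem orthogonal_iff_sum_partialIsometry_general
    {A : Type*} [NormedRing A] [StarRing A]
    [NormedAlgebra ℂ A] [StarModule ℂ A]
    (u v : A) (hu : u * star u * u = u) (hv : v * star v * v = v) :
    (star u * v = 0 ∧ u * star v = 0) ↔
      ∀ lam : ℂ, ‖lam‖ = 1 →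
        (u + lam • v) * star (u + lam • v) * (u + lam • v) = u + lam • v := by
  have : IsAddTorsionFree A := .of_isTorsionFree ℂ A
  have expand (lam : ℂ) (hlam : ‖lam‖ = 1) :
      (u + lam • v) * star (u + lam • v) * (u + lam • v) = u + lam • v +
        (lam • (u * star u * v + v * star u * u) + (lam * lam) • (v * star u * v) +
          star lam • (u * star v * u) + (u * star v * v + v * star v * u)) := by
    rw [add_smul_mul_star_mul_add_smul u v (by simp [Complex.conj_mul', hlam]), hu, hv]
  constructor
  · rintro ⟨huv, hvu⟩ lam hlam
    have hvu' : v * star u = 0 := by simpa using congrArg star hvu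
    have huv' : star v * u = 0 := by simpa using congrArg star huv
    rw [expand lam hlam]
    simp [mul_assoc, huv, hvu, hvu', huv']
  · intro h
    obtain ⟨hfirst, hconst⟩ :=
      Complex.eq_zero_and_eq_zero_of_forall_norm_eq_one fun lam hlam ↦
        add_eq_left.mp ((expand lam hlam).symm.trans (h lam hlam))
    have hvu' : v * star u = 0 := IsPartialIsometry.mul_star_eq_zero_of_add_eq_zero hu hfirst
    have huv' : star v * u = 0 := IsPartialIsometry.star_mul_eq_zero_of_add_eq_zero hv hconst
    exact ⟨by simpa using congrArg star huv', by simpa using congrArg star hvu'⟩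

/-- Two partial isometries `u, v` in a C*-algebra are orthogonal
(`u*v = uv* = 0`) iff `u + λv` is a partial isometry for every unimodular `λ`. -/
theorem orthogonal_iff_sum_partialIsometry
    {A : Type*} [NormedRing A] [StarRing A] [CStarRing A]
    [NormedAlgebra ℂ A] [StarModule ℂ A] [CompleteSpace A]
    (u v : A) (hu : u * star u * u = u) (hv : v * star v * v = v) :
    (star u * v = 0 ∧ u * star v = 0) ↔
      ∀ lam : ℂ, ‖lam‖ = 1 →
        (u + lam • v) * star (u + lam • v) * (u + lam • v) = u + lam • v :=
  orthogonal_iff_sum_partialIsometry_general u v hu hv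
end

section
/- Let T : A → B be a linear map between C*-algebras that preserves cubes (T(aa*a) = Ta(Ta)*Ta for all a). If a, b ∈ A satisfy a*b = ab* = 0, then (Ta)*(Tb) = (Ta)(Tb)* = 0; that is, every triple homomorphism is disjointness preserving. -/
/-!
Summing the cubes of `l • a + b` over the fourth roots of unity `l` isolates the terms of degree
`l * conj l`, so a cube-preserving linear map also preserves `a a⋆ b + b a⋆ a`. For disjoint `a`, `b`
this element vanishes, hence `x x⋆ y = -(y x⋆ x)` for `x = T a`, `y = T b`. Then
`(x⋆ y)⋆ (x⋆ y) = -(y⋆ y)(x⋆ x)` is at once positive and the negative of a product of two positive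
elements; that product is self-adjoint, so its factors commute and it is positive too, which forces
`x⋆ y = 0`. The same argument applies to `x y⋆`.
-/

open Complex

lemma sum_cube_smul_add_fourth_roots {R : Type*} [Ring R] [StarRing R] [Algebra ℂ R]
    [StarModule ℂ R] (a b : R) :
    (a + b) * star (a + b) * (a + b) + (-a + b) * star (-a + b) * (-a + b)
      + (I • a + b) * star (I • a + b) * (I • a + b)
      + (-I • a + b) * star (-I • a + b) * (-I • a + b)
      = (4 : ℂ) • (a * star a * b + b * star a * a + b * star b * b) := by
  simp only [star_add, star_neg, star_smul, star_def, conj_I, mul_add, add_mul, neg_mul, mul_neg,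
    smul_mul_assoc, mul_smul_comm, neg_neg]
  match_scalars <;> ring_nf <;> simp only [I_sq] <;> ring

lemma LinearMap.map_mul_star_mul_add_of_map_cube {R S : Type*} [Ring R] [StarRing R]
    [Algebra ℂ R] [StarModule ℂ R] [Ring S] [StarRing S] [Algebra ℂ S] [StarModule ℂ S]
    (T : R →ₗ[ℂ] S) (hT : ∀ a, T (a * star a * a) = T a * star (T a) * T a) (a b : R) :
    T (a * star a * b + b * star a * a) = T a * star (T a) * T b + T b * star (T a) * T a := by
  have h := congrArg T (sum_cube_smul_add_fourth_roots a b)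
  simp only [map_add, map_smul, map_neg, hT] at h
  rw [sum_cube_smul_add_fourth_roots] at h
  rw [map_add]
  linear_combination (norm := module) (-4⁻¹ : ℂ) • h

section CStarAlgebra

variable {B : Type*} [CStarAlgebra B]

lemma eq_zero_of_star_mul_self_eq_neg_mul [PartialOrder B] [StarOrderedRing B] {c p q : B}
    (hp : 0 ≤ p) (hq : 0 ≤ q) (h : star c * c = -(p * q)) : c = 0 := by
  have hpq : IsSelfAdjoint (p * q) := by
    rw [← neg_neg (p * q), ← h]
    exact (IsSelfAdjoint.star_mul_self c).neg
  have hpq_nonneg : 0 ≤ p * q :=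
    Commute.mul_nonneg hp hq <| (hp.isSelfAdjoint.commute_iff hq.isSelfAdjoint).mpr hpq
  refine (CStarRing.star_mul_self_eq_zero_iff c).mp <| le_antisymm ?_ (star_mul_self_nonneg c)
  rw [h]
  exact neg_nonpos.mpr hpq_nonneg

lemma star_mul_eq_zero_and_mul_star_eq_zero_of_mul_star_mul_add_eq_zero {x y : B}
    (h : x * star x * y + y * star x * x = 0) : star x * y = 0 ∧ x * star y = 0 := by
  let : PartialOrder B := CStarAlgebra.spectralOrder B
  have : StarOrderedRing B := CStarAlgebra.spectralOrderedRing B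
  have hxy : x * star x * y = -(y * star x * x) := eq_neg_of_add_eq_zero_left h
  constructor
  · refine eq_zero_of_star_mul_self_eq_neg_mul (star_mul_self_nonneg y) (star_mul_self_nonneg x) ?_
    calc star (star x * y) * (star x * y) = star y * (x * star x * y) := by
          simp only [star_mul, star_star, mul_assoc]
      _ = -(star y * y * (star x * x)) := by
          rw [hxy]
          simp only [mul_neg, mul_assoc]
  · refine eq_zero_of_star_mul_self_eq_neg_mul (mul_star_self_nonneg x) (mul_star_self_nonneg y) ?_
    calc star (x * star y) * (x * star y) = y * star x * x * star y := by
          simp only [star_mul, star_star, mul_assoc]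
      _ = -(x * star x * (y * star y)) := by
          rw [← neg_eq_iff_eq_neg.mpr hxy]
          simp only [neg_mul, mul_assoc]

end CStarAlgebra

theorem triple_hom_disjointness_preserving_general
    {A B : Type*} [NormedRing A] [StarRing A]
    [NormedAlgebra ℂ A] [StarModule ℂ A]
    [NormedRing B] [StarRing B] [CStarRing B]
    [NormedAlgebra ℂ B] [StarModule ℂ B] [CompleteSpace B]
    (T : A →ₗ[ℂ] B) (hT : ∀ a : A, T (a * star a * a) = T a * star (T a) * T a)
    (a b : A) (h1 : star a * b = 0) (h2 : a * star b = 0) :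
    star (T a) * T b = 0 ∧ T a * star (T b) = 0 := by
  let : CStarAlgebra B := ⟨⟩
  have hba : b * star a = 0 := by rw [← star_star b, ← star_mul, h2, star_zero]
  have hab : a * star a * b + b * star a * a = 0 := by
    rw [mul_assoc, h1, hba, mul_zero, zero_mul, add_zero]
  apply star_mul_eq_zero_and_mul_star_eq_zero_of_mul_star_mul_add_eq_zero
  rw [← T.map_mul_star_mul_add_of_map_cube hT, hab, map_zero]

/-- Every cube-preserving (hence triple-preserving) linear map between
C*-algebras is disjointness preserving. -/
theorem triple_hom_disjointness_preserving
    {A B : Type*} [NormedRing A] [StarRing A] [CStarRing A]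
    [NormedAlgebra ℂ A] [StarModule ℂ A] [CompleteSpace A]
    [NormedRing B] [StarRing B] [CStarRing B]
    [NormedAlgebra ℂ B] [StarModule ℂ B] [CompleteSpace B]
    (T : A →ₗ[ℂ] B) (hT : ∀ a : A, T (a * star a * a) = T a * star (T a) * T a)
    (a b : A) (h1 : star a * b = 0) (h2 : a * star b = 0) :
    star (T a) * T b = 0 ∧ T a * star (T b) = 0 :=
  triple_hom_disjointness_preserving_general T hT a b h1 h2
end

section
/- Let T : A → B be a linear map between C*-algebras that preserves cubes, and suppose T(1) = p is a projection (where A is unital). Then T preserves adjoints of self-adjoint elements: for every self-adjoint a ∈ A, T(a) is self-adjoint (indeed Ta = p(Ta)*p = (Ta)*, given additionally that pTa = Tap = Ta). -/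
/-- A triple homomorphism `T` of C*-algebras with `T 1 = p` a projection,
satisfying `p(Ta) = (Ta)p = Ta`, sends self-adjoint elements to self-adjoint
elements: `Ta = p(Ta)*p = (Ta)*`. -/
theorem triple_hom_preserves_selfAdjoint
    {A B : Type*} [NormedRing A] [StarRing A] [CStarRing A]
    [NormedAlgebra ℂ A] [StarModule ℂ A] [CompleteSpace A]
    [NormedRing B] [StarRing B] [CStarRing B]
    [NormedAlgebra ℂ B] [StarModule ℂ B] [CompleteSpace B]
    (T : A →ₗ[ℂ] B)
    (hT : ∀ x y z : A, T ((1 / 2 : ℂ) • (x * star y * z + z * star y * x)) =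
      (1 / 2 : ℂ) • (T x * star (T y) * T z + T z * star (T y) * T x))
    (p : B) (hp1 : T 1 = p) (hpstar : star p = p) (hpidem : p * p = p)
    (hpa : ∀ a : A, p * T a = T a ∧ T a * p = T a)
    (a : A) (ha : star a = a) :
    T a = p * star (T a) * p ∧ star (T a) = T a := by
  have h := hT 1 a 1
  rw [hp1, ha] at h
  have hL : (1 / 2 : ℂ) • (1 * a * 1 + 1 * a * 1) = a := by
    rw [one_mul, mul_one]
    rw [← two_smul ℂ a, smul_smul]
    norm_num
  have hR : (1 / 2 : ℂ) • (p * star (T a) * p + p * star (T a) * p)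
      = p * star (T a) * p := by
    rw [← two_smul ℂ (p * star (T a) * p), smul_smul]
    norm_num
  rw [hL, hR] at h
  refine ⟨h, ?_⟩
  have h2 := congrArg star h
  rw [star_mul, star_mul, star_star, hpstar] at h2
  -- h2 : star (T a) = p * (T a * p)  after reassoc
  rw [(hpa a).2, (hpa a).1] at h2
  exact h2
end

section
/- Let T : A → B be a linear map between C*-algebras. If T preserves self-adjointness and T(aba) = (Ta)(Tb)(Ta) for all self-adjoint a, b ∈ A, then T((a+ib)(a+ib)*(a+ib)) = T(a+ib)·T(a+ib)*·T(a+ib) for all self-adjoint a, b ∈ A. -/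
open Complex in
private lemma cube_expand_aux {R : Type*} [Ring R] [Module ℂ R]
    [SMulCommClass ℂ R R] [IsScalarTower ℂ R R] (x y : R) :
    (x + I • y) * (x - I • y) * (x + I • y) =
      (x * x * x + (x * y * y + y * y * x) - y * x * y) +
        I • ((x * x * y + y * x * x) - x * y * x + y * y * y) := by
  simp only [sub_eq_add_neg, mul_add, add_mul, mul_neg, neg_mul, mul_smul_comm,
    smul_mul_assoc, smul_smul, Complex.I_mul_I, neg_smul, one_smul, smul_add,
    smul_neg, neg_neg, smul_sub]
  abel

open Complex in
/-- If a complex-linear map `T` between C*-algebras preserves self-adjointness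
and satisfies `T(aba) = TaTbTa` for self-adjoint `a, b`, then `T` preserves
cubes of arbitrary elements `a + ib` (`a, b` self-adjoint). -/
theorem cube_preserved_from_selfAdjoint_data
    {A B : Type*} [NormedRing A] [StarRing A] [CStarRing A]
    [NormedAlgebra ℂ A] [StarModule ℂ A] [CompleteSpace A]
    [NormedRing B] [StarRing B] [CStarRing B]
    [NormedAlgebra ℂ B] [StarModule ℂ B] [CompleteSpace B]
    (T : A →ₗ[ℂ] B)
    (hsa : ∀ a : A, star a = a → star (T a) = T a)
    (htriple : ∀ a b : A, star a = a → star b = b → T (a * b * a) = T a * T b * T a)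
    (a b : A) (ha : star a = a) (hb : star b = b) :
    T ((a + I • b) * star (a + I • b) * (a + I • b)) =
      T (a + I • b) * star (T (a + I • b)) * T (a + I • b) := by
  have hTa := hsa a ha
  have hTb := hsa b hb
  have hpol : ∀ x y c : A, star x = x → star y = y → star c = c →
      T (x * c * y) + T (y * c * x) = T x * T c * T y + T y * T c * T x := by
    intro x y c hx hy hc
    have h1 := htriple (x + y) c (by rw [star_add, hx, hy]) hc
    have hexp : (x + y) * c * (x + y) = x * c * x + (x * c * y + y * c * x) + y * c * y := by
      noncomm_ring
    rw [hexp] at h1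
    simp only [map_add] at h1
    rw [htriple x c hx hc, htriple y c hy hc,
      show (T x + T y) * T c * (T x + T y)
        = T x * T c * T x + (T x * T c * T y + T y * T c * T x) + T y * T c * T y by
          noncomm_ring] at h1
    exact add_left_cancel (add_right_cancel h1)
  have e1 : star (a + I • b) = a - I • b := by
    rw [star_add, star_smul, ha, hb, Complex.star_def, Complex.conj_I, neg_smul,
      ← sub_eq_add_neg]
  have e2 : T (a + I • b) = T a + I • T b := by rw [map_add, map_smul]
  have e3 : star (T (a + I • b)) = T a - I • T b := by
    rw [e2, star_add, star_smul, hTa, hTb, Complex.star_def, Complex.conj_I, neg_smul,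
      ← sub_eq_add_neg]
  rw [e1, e3, e2, cube_expand_aux, cube_expand_aux]
  simp only [map_add, map_sub, map_smul]
  rw [htriple a a ha ha, htriple b b hb hb, htriple a b ha hb,
    htriple b a hb ha, hpol a b b ha hb hb, hpol a b a ha hb ha]
end

section
/- Let u be a partial isometry in a C*-algebra with initial projection p = u*u and range projection q = uu*. If x is an element satisfying 2x = qx + xp, then x = qx = xp. -/
/-- If `u` is a partial isometry in a C*-algebra with `p = u*u`, `q = uu*`, and
`x` satisfies `2x = qx + xp`, then `x = qx = xp`. -/
theorem eq_of_two_smul_eq_proj_sum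
    {A : Type*} [NormedRing A] [StarRing A] [CStarRing A]
    [NormedAlgebra ℂ A] [StarModule ℂ A] [CompleteSpace A]
    (u x : A) (hu : u * star u * u = u)
    (hx : (2 : ℂ) • x = (u * star u) * x + x * (star u * u)) :
    x = (u * star u) * x ∧ x = x * (star u * u) := by
  have hu' : star u * u * star u = star u := by
    have := congrArg star hu
    simp only [star_mul, star_star] at this
    rw [← mul_assoc] at this
    exact this
  have hqq : (u * star u) * (u * star u) = u * star u := by
    rw [show (u * star u) * (u * star u) = (u * star u * u) * star u by noncomm_ring, hu]
  have hpp : (star u * u) * (star u * u) = star u * u := by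
    rw [show (star u * u) * (star u * u) = (star u * u * star u) * u by noncomm_ring, hu']
  have h1 : (u * star u) * x = (u * star u) * (x * (star u * u)) := by
    have h := congrArg (fun z => (u * star u) * z) hx
    simp only [mul_add, mul_smul_comm, ← mul_assoc, hqq] at h
    rw [two_smul] at h
    have h' := add_left_cancel h
    simp only [mul_assoc] at h' ⊢
    exact h'
  have h2 : x * (star u * u) = (u * star u) * (x * (star u * u)) := by
    have h := congrArg (fun z => z * (star u * u)) hx
    simp only [add_mul, smul_mul_assoc, mul_assoc, hpp] at h
    rw [two_smul] at h
    have h' := add_right_cancel h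
    simp only [mul_assoc] at h' ⊢
    exact h'
  have hqp : (u * star u) * x = x * (star u * u) := h1.trans h2.symm
  have hxq : x = (u * star u) * x := by
    have h : (2 : ℂ) • x = (2 : ℂ) • ((u * star u) * x) := by
      rw [hx, hqp, two_smul]
    exact smul_right_injective A two_ne_zero h
  exact ⟨hxq, hxq.trans hqp⟩
end

section
/- Let T : A → B be a linear map between C*-algebras, let u = T(1) be a partial isometry with q = uu*, and suppose qTa = Ta = Ta(u*u) for all a. If the map J = u*T satisfies J(a^{(3)}) = (Ja)^{(3)} for all a ∈ A, then T(a^{(3)}) = (Ta)^{(3)} for all a ∈ A. -/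
/-- Let `T` be a linear map of C*-algebras with `u = T1` a partial isometry,
`q = uu*`, and `qTa = Ta = Ta(u*u)` for all `a`.  If `J = u*T` preserves cubes,
then so does `T`. -/
theorem cube_preserving_of_corner_map
    {A B : Type*} [NormedRing A] [StarRing A] [CStarRing A]
    [NormedAlgebra ℂ A] [StarModule ℂ A] [CompleteSpace A]
    [NormedRing B] [StarRing B] [CStarRing B]
    [NormedAlgebra ℂ B] [StarModule ℂ B] [CompleteSpace B]
    (T : A →ₗ[ℂ] B) (u : B) (hu1 : T 1 = u) (hu : u * star u * u = u)
    (hqp : ∀ a : A, (u * star u) * T a = T a ∧ T a * (star u * u) = T a)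
    (hJ : ∀ a : A, star u * T (a * star a * a) =
      (star u * T a) * star (star u * T a) * (star u * T a)) :
    ∀ a : A, T (a * star a * a) = T a * star (T a) * T a := by
  intro a
  have hq := (hqp a).1
  have hq3 := (hqp (a * star a * a)).1
  calc T (a * star a * a)
      = u * star u * T (a * star a * a) := hq3.symm
    _ = u * (star u * T (a * star a * a)) := by rw [mul_assoc]
    _ = u * ((star u * T a) * star (star u * T a) * (star u * T a)) := by rw [hJ a]
    _ = (u * star u * T a) * star (T a) * (u * star u * T a) := by
        simp only [star_mul, star_star]; noncomm_ring
    _ = T a * star (T a) * T a := by rw [hq]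
end
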